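/- Let q ≥ 2 and n ≥ 1. For every partition λ of n, Q_{n,q}(λ) ≥ (1 - 1/q^n)(1 - 1/q)^4 · P_{n,q}(λ), where P_{n,q}(λ) = q^n (1/q)_n / (∏_j q^{(λ'_j)^2} (1/q)_{m_j(λ)}) and Q_{n,q}(λ) = (1/z(n,q)) · 1/(q^{|λ|+2n(λ)} ∏_{s∈λ}(1 - 1/q^{h(s)})^2) with z(n,q) the coefficient of u^n in ∏_{i≥1}∏_{j≥0}(1 - u/q^{i+j})^{-1}. -/

import Mathlib

open Finset

noncomputable section

/-- The q-Pochhammer-type product `(1/q)_m = ∏_{k=1}^m (1 - 1/q^k)`. -/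
def qPoch (q : ℝ) (m : ℕ) : ℝ := ∏ k ∈ Finset.Icc 1 m, (1 - 1/q^k)

/-- `conjPart l j = λ'_j`, the `j`-th part of the conjugate partition
(the number of parts of `l` that are at least `j`). -/
def conjPart {n : ℕ} (l : n.Partition) (j : ℕ) : ℕ :=
  Multiset.countP (fun p => j ≤ p) l.parts

/-- `rowLen l i = λ_i`, the `i`-th largest part of `l` (1-indexed, `0` if `i` exceeds
the number of parts). -/
def rowLen {n : ℕ} (l : n.Partition) (i : ℕ) : ℕ :=
  ((Finset.Icc 1 n).filter (fun j => i ≤ conjPart l j)).card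

/-- The Young diagram of `l`, as the set of cells `(i,j)` (row `i`, column `j`,
both 1-indexed) with `1 ≤ j ≤ λ_i`. -/
def cells {n : ℕ} (l : n.Partition) : Finset (ℕ × ℕ) :=
  (Finset.Icc 1 n ×ˢ Finset.Icc 1 n).filter (fun s => s.2 ≤ rowLen l s.1)

/-- The arm length `a(s) = λ_i - j` of the cell `s = (i,j)`. -/
def arm {n : ℕ} (l : n.Partition) (s : ℕ × ℕ) : ℕ := rowLen l s.1 - s.2

/-- The leg length `l(s) = λ'_j - i` of the cell `s = (i,j)`. -/
def leg {n : ℕ} (l : n.Partition) (s : ℕ × ℕ) : ℕ := conjPart l s.2 - s.1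

/-- The hook length `h(s) = a(s) + l(s) + 1` of the cell `s`. -/
def hookLen {n : ℕ} (l : n.Partition) (s : ℕ × ℕ) : ℕ := arm l s + leg l s + 1

/-- `n(λ) = ∑_i (i-1) λ_i`. -/
def nStat {n : ℕ} (l : n.Partition) : ℕ := ∑ i ∈ Finset.Icc 1 n, (i - 1) * rowLen l i

/-- The multiplicity `m_j(λ)` of `j` as a part of `l`. -/
def mult {n : ℕ} (l : n.Partition) (j : ℕ) : ℕ := Multiset.count j l.parts

/-- The denominator `∏_j q^{(λ'_j)^2} (1/q)_{m_j(λ)}` appearing in the measure `P_{n,q}`. -/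
def Pden (q : ℝ) {n : ℕ} (l : n.Partition) : ℝ :=
  ∏ j ∈ Finset.Icc 1 n, q ^ ((conjPart l j)^2) * qPoch q (mult l j)

/-- The measure `P_{n,q}(λ) = q^n (1/q)_n / ∏_j q^{(λ'_j)^2} (1/q)_{m_j(λ)}`. -/
def Pmeas (q : ℝ) {n : ℕ} (l : n.Partition) : ℝ := q^n * qPoch q n / Pden q l

/-- `z(n,q)`: the coefficient of `u^n` in the formal expansion of
`∏_{i≥1} ∏_{j≥0} 1/(1 - u/q^{i+j})`, obtained by expanding each factor
as a geometric series and collecting terms of total degree `n`. -/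
def zCoeff (n : ℕ) (q : ℝ) : ℝ :=
  ∑' f : {f : (ℕ × ℕ) →₀ ℕ // (f.sum fun _ k => k) = n},
    ∏ p ∈ (f : (ℕ × ℕ) →₀ ℕ).support,
      ((1 : ℝ) / q ^ ((p.1 + 1) + p.2)) ^ ((f : (ℕ × ℕ) →₀ ℕ) p)

/-- The measure `Q_{n,q}(λ) = (1/z(n,q)) / (q^{|λ|+2n(λ)} ∏_{s∈λ} (1-1/q^{h(s)})^2)`. -/
def Qmeas (q : ℝ) {n : ℕ} (l : n.Partition) : ℝ :=
  (1 / zCoeff n q) *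
    (1 / (q ^ (n + 2 * nStat l) * ∏ s ∈ cells l, (1 - 1/q^(hookLen l s))^2))

/-- `P_{n,q}^r`: the `P_{n,q}`-probability that the largest part of `λ` is `< r`. -/
def Ptail (n : ℕ) (q : ℝ) (r : ℕ) : ℝ :=
  ∑ l ∈ Finset.univ.filter (fun l : n.Partition => ∀ p ∈ l.parts, p < r), Pmeas q l

end

/-!
Write `x = 1/q` and `N = n + 2n(λ) = ∑ⱼ λ'ⱼ²`. Both measures carry the factor `q^(-N)`, so with
`H = ∏_s (1 - x^h(s))` and `M = ∏ⱼ (1/q)_{mⱼ}` the claim reduces to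
`(1 - x^n)(1 - x)^4 q^n (1/q)_n z(n,q) H² ≤ M`.

* In column `j` the lowest `mⱼ` cells have hook lengths `1, …, mⱼ`, so `H² ≤ H ≤ M`.
* The terms of `z(n,q)` are `x^n x^(∑ f(p) (p₁ + p₂))`; forgetting `f(0,0)` bounds `q^n z(n,q)` by
  `∏_{p ≠ 0} (1 - x^(p₁+p₂))⁻¹ = ∏_{k ≥ 1} (1 - x^k)^(-(k+1))`. For `x ≤ 1/2` this product is at
  least `(1 - x)^5 (1 - x²)(1 - x³)`: keep the factors with `k ≤ 4` and bound the others from below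
  by `1 - ∑_{k ≥ 5} (k+1) x^k = 1 - x^5 (6 - 5x)/(1 - x)²`.
* Finally `(1 - x^n)(1/q)_n ≤ (1 - x)(1 - x²)(1 - x³)`, which absorbs the remaining factor.
-/

theorem one_sub_sum_le_prod {ι : Type*} (s : Finset ι) {c d : ι → ℝ}
    (hc : ∀ i ∈ s, 0 ≤ c i) (hd : ∀ i ∈ s, 0 ≤ d i) (hcd : ∀ i ∈ s, 1 - d i ≤ c i) :
    1 - ∑ i ∈ s, d i ≤ ∏ i ∈ s, c i := by
  induction s using cons_induction with
  | empty => simp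
  | cons a s ha ih =>
    simp only [forall_mem_cons] at hc hd hcd
    rw [sum_cons, prod_cons]
    have ih := ih hc.2 hd.2 hcd.2
    have hs : 0 ≤ ∑ i ∈ s, d i := sum_nonneg hd.2
    rcases le_total 0 (1 - ∑ i ∈ s, d i) with h | h
    · nlinarith [mul_le_mul_of_nonneg_left ih hc.1, mul_le_mul_of_nonneg_right hcd.1 h]
    · nlinarith [mul_nonneg hc.1 (prod_nonneg hc.2)]

theorem sum_le_inv_one_sub_of_lt_one {y : ℝ} (hy0 : 0 ≤ y) (hy1 : y < 1) (t : Finset ℕ) :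
    ∑ k ∈ t, y ^ k ≤ (1 - y)⁻¹ :=
  tsum_geometric_of_lt_one hy0 hy1 ▸
    (summable_geometric_of_lt_one hy0 hy1).sum_le_tsum t fun k _ => pow_nonneg hy0 k

theorem sum_prod_pow_le_prod_inv_one_sub {ι : Type*} [Fintype ι] [DecidableEq ι] {y : ι → ℝ}
    (hy0 : ∀ i, 0 ≤ y i) (hy1 : ∀ i, y i < 1) (R : Finset (ι → ℕ)) :
    ∑ φ ∈ R, ∏ i, y i ^ φ i ≤ ∏ i, (1 - y i)⁻¹ :=
  calc ∑ φ ∈ R, ∏ i, y i ^ φ i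
      ≤ ∑ φ ∈ Fintype.piFinset fun i => R.image (· i), ∏ i, y i ^ φ i :=
        sum_le_sum_of_subset_of_nonneg
          (fun _ hφ => Fintype.mem_piFinset.2 fun _ => mem_image_of_mem _ hφ)
          (fun _ _ _ => prod_nonneg fun i _ => pow_nonneg (hy0 i) _)
    _ = ∏ i, ∑ k ∈ R.image (· i), y i ^ k := (prod_univ_sum _ _).symm
    _ ≤ ∏ i, (1 - y i)⁻¹ :=
        prod_le_prod (fun i _ => sum_nonneg fun k _ => pow_nonneg (hy0 i) k)
          (fun i _ => sum_le_inv_one_sub_of_lt_one (hy0 i) (hy1 i) _)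

theorem one_sub_pow_nonneg_le_one {x : ℝ} (hx0 : 0 ≤ x) (hx1 : x ≤ 1) (k : ℕ) :
    0 ≤ 1 - x ^ k ∧ 1 - x ^ k ≤ 1 :=
  ⟨sub_nonneg.2 (pow_le_one₀ hx0 hx1), sub_le_self _ (pow_nonneg hx0 k)⟩

theorem one_sub_pow_five_mul_pos {x : ℝ} (hx0 : 0 ≤ x) (hx1 : x < 1) :
    0 < (1 - x) ^ 5 * (1 - x ^ 2) * (1 - x ^ 3) := by
  have h := fun k (hk : k ≠ 0) => sub_pos.2 (pow_lt_one₀ hx0 hx1 hk)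
  simpa using mul_pos (mul_pos (pow_pos (h 1 one_ne_zero) 5) (h 2 two_ne_zero)) (h 3 three_ne_zero)

theorem sum_Ico_succ_mul_pow_mul_one_sub_sq (x : ℝ) {a b : ℕ} (hab : a ≤ b) :
    (∑ m ∈ Ico a b, ((m : ℝ) + 1) * x ^ m) * (1 - x) ^ 2
      = x ^ a * ((a + 1) - a * x) - x ^ b * ((b + 1) - b * x) := by
  induction b, hab using Nat.le_induction with
  | base => simp
  | succ b hab ih =>
    rw [sum_Ico_succ_top hab, add_mul, ih]
    push_cast
    ring

theorem sum_Ico_succ_mul_pow_mul_one_sub_sq_le {x : ℝ} (hx0 : 0 ≤ x) (hx1 : x ≤ 1) (a b : ℕ) :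
    (∑ m ∈ Ico a b, ((m : ℝ) + 1) * x ^ m) * (1 - x) ^ 2 ≤ x ^ a * ((a + 1) - a * x) := by
  rcases le_total a b with hab | hba
  · rw [sum_Ico_succ_mul_pow_mul_one_sub_sq x hab, sub_le_self_iff]
    exact mul_nonneg (pow_nonneg hx0 b) (by nlinarith)
  · rw [Ico_eq_empty_of_le hba, sum_empty, zero_mul]
    exact mul_nonneg (pow_nonneg hx0 a) (by nlinarith)

theorem one_sub_sum_Ico_le_prod_Ico_one_sub_pow_pow {x : ℝ} (hx0 : 0 ≤ x) (hx1 : x ≤ 1)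
    (a b : ℕ) :
    1 - ∑ k ∈ Ico a b, ((k : ℝ) + 1) * x ^ k ≤ ∏ k ∈ Ico a b, (1 - x ^ k) ^ (k + 1) := by
  have hf := one_sub_pow_nonneg_le_one hx0 hx1
  refine one_sub_sum_le_prod _ (fun k _ => pow_nonneg (hf k).1 _) (fun k _ => by positivity)
    (fun k _ => ?_)
  have := one_add_mul_le_pow (a := -x ^ k) (by linarith [pow_le_one₀ hx0 hx1 (n := k)]) (k + 1)
  simp only [← sub_eq_add_neg, mul_neg] at this
  exact_mod_cast this

-- With `x = 1/(s+2)` and denominators cleared, the difference of the two sides is a polynomial in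
-- `s ≥ 0` with nonnegative coefficients.
theorem one_sub_pow_five_mul_sq_le {x : ℝ} (hx0 : 0 ≤ x) (hx : x ≤ 1 / 2) :
    (1 - x) ^ 5 * (1 - x ^ 2) * (1 - x ^ 3) * (1 - x) ^ 2
      ≤ (1 - x) ^ 2 * (1 - x ^ 2) ^ 3 * (1 - x ^ 3) ^ 4 * (1 - x ^ 4) ^ 5
        * ((1 - x) ^ 2 - x ^ 5 * (6 - 5 * x)) := by
  rcases hx0.eq_or_lt with rfl | hx0
  · norm_num
  obtain ⟨s, hs, rfl⟩ : ∃ s : ℝ, 0 ≤ s ∧ x = (s + 2)⁻¹ :=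
    ⟨x⁻¹ - 2, by rw [sub_nonneg, le_inv_comm₀ (by norm_num) hx0]; linarith, by simp⟩
  have h : 0 < s + 2 := by linarith
  field_simp
  rw [← sub_nonneg]
  ring_nf
  positivity

theorem le_prod_Ico_one_sub_pow_pow {x : ℝ} (hx0 : 0 ≤ x) (hx : x ≤ 1 / 2) (N : ℕ) :
    (1 - x) ^ 5 * (1 - x ^ 2) * (1 - x ^ 3)
      ≤ ∏ k ∈ Ico 1 N, (1 - x ^ k) ^ (k + 1) := by
  have hx1 : x ≤ 1 := by linarith
  have hf := fun k => one_sub_pow_nonneg_le_one hx0 hx1 k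
  obtain ⟨M, hNM, h5M⟩ : ∃ M, N ≤ M ∧ 5 ≤ M := ⟨max N 5, le_max_left _ _, le_max_right _ _⟩
  set T := ∑ k ∈ Ico 5 M, ((k : ℝ) + 1) * x ^ k
  have hN : ∏ k ∈ Ico 1 M, (1 - x ^ k) ^ (k + 1)
      ≤ ∏ k ∈ Ico 1 N, (1 - x ^ k) ^ (k + 1) :=
    prod_le_prod_of_subset_of_le_one (Ico_subset_Ico_right hNM)
      (fun k _ => pow_nonneg (hf k).1 _) (fun k _ _ => pow_le_one₀ (hf k).1 (hf k).2)
  have hsplit : ∏ k ∈ Ico 1 M, (1 - x ^ k) ^ (k + 1)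
      = (1 - x) ^ 2 * (1 - x ^ 2) ^ 3 * (1 - x ^ 3) ^ 4 * (1 - x ^ 4) ^ 5
        * ∏ k ∈ Ico 5 M, (1 - x ^ k) ^ (k + 1) := by
    rw [← prod_Ico_consecutive _ (by norm_num : 1 ≤ 5) h5M]
    simp [prod_Ico_succ_top]
  have htail := one_sub_sum_Ico_le_prod_Ico_one_sub_pow_pow hx0 hx1 5 M
  have hT : T * (1 - x) ^ 2 ≤ x ^ 5 * (6 - 5 * x) := by
    have := sum_Ico_succ_mul_pow_mul_one_sub_sq_le hx0 hx1 5 M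
    norm_num at this
    exact this
  set P₄ := (1 - x) ^ 2 * (1 - x ^ 2) ^ 3 * (1 - x ^ 3) ^ 4 * (1 - x ^ 4) ^ 5
  have hP₄ : 0 ≤ P₄ := by
    have h1 : 0 ≤ 1 - x := by linarith
    apply_rules [mul_nonneg, pow_nonneg, (hf _).1]
  have hsq : 0 < (1 - x) ^ 2 := by nlinarith
  calc (1 - x) ^ 5 * (1 - x ^ 2) * (1 - x ^ 3)
      ≤ P₄ * (1 - T) := by
        refine le_of_mul_le_mul_right ?_ hsq
        calc _ ≤ P₄ * ((1 - x) ^ 2 - x ^ 5 * (6 - 5 * x)) := one_sub_pow_five_mul_sq_le hx0 hx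
          _ ≤ P₄ * ((1 - x) ^ 2 - T * (1 - x) ^ 2) := by gcongr
          _ = P₄ * (1 - T) * (1 - x) ^ 2 := by ring
    _ ≤ P₄ * ∏ k ∈ Ico 5 M, (1 - x ^ k) ^ (k + 1) := by gcongr
    _ = ∏ k ∈ Ico 1 M, (1 - x ^ k) ^ (k + 1) := hsplit.symm
    _ ≤ _ := hN

theorem le_prod_one_sub_pow_add {x : ℝ} (hx0 : 0 ≤ x) (hx : x ≤ 1 / 2) (S : Finset (ℕ × ℕ))
    (hS : (0, 0) ∉ S) :
    (1 - x) ^ 5 * (1 - x ^ 2) * (1 - x ^ 3) ≤ ∏ p ∈ S, (1 - x ^ (p.1 + p.2)) := by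
  set N := S.sup (fun p => p.1 + p.2) + 1
  have hmaps : ∀ p ∈ S, p.1 + p.2 ∈ Ico 1 N := by
    rintro ⟨a, b⟩ hp
    have : a + b ≤ S.sup (fun p => p.1 + p.2) := Finset.le_sup (f := fun p => p.1 + p.2) hp
    have : a + b ≠ 0 := by
      rintro h
      obtain ⟨rfl, rfl⟩ : a = 0 ∧ b = 0 := by omega
      exact hS hp
    simp only [mem_Ico]
    omega
  have hf := one_sub_pow_nonneg_le_one hx0 (by linarith)
  refine (le_prod_Ico_one_sub_pow_pow hx0 hx N).trans ?_
  rw [← prod_fiberwise_of_maps_to' hmaps (fun k => 1 - x ^ k)]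
  refine prod_le_prod (fun k _ => pow_nonneg (hf k).1 _) (fun k _ => ?_)
  rw [prod_const]
  refine pow_le_pow_of_le_one (hf k).1 (hf k).2 ?_
  calc (S.filter fun p => p.1 + p.2 = k).card
      ≤ (Finset.HasAntidiagonal.antidiagonal k).card :=
        card_le_card fun p hp => Finset.HasAntidiagonal.mem_antidiagonal.2 (mem_filter.1 hp).2
    _ = k + 1 := Finset.Nat.card_antidiagonal k

theorem Finsupp.eq_of_sum_eq_of_forall_ne {α : Type*} {f g : α →₀ ℕ} (a : α)
    (hs : (f.sum fun _ k => k) = g.sum fun _ k => k) (h : ∀ b ≠ a, f b = g b) : f = g := by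
  have herase : f.erase a = g.erase a := by
    ext b
    rcases eq_or_ne b a with rfl | hb
    · simp
    · simp [Finsupp.erase_ne hb, h b hb]
  have hsum : ∀ f : α →₀ ℕ, (f.sum fun _ k => k) = f a + (f.erase a).sum fun _ k => k := by
    intro f
    conv_lhs => rw [← Finsupp.single_add_erase a f]
    rw [Finsupp.sum_add_index' (fun _ => rfl) (fun _ _ _ => rfl), Finsupp.sum_single_index rfl]
  have ha : f a = g a := by
    have := hsum f
    rw [hs, hsum g, herase] at this
    omega
  ext b
  rcases eq_or_ne b a with rfl | hb
  exacts [ha, h b hb]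

theorem Finsupp.injOn_restrict_of_sum_eq {α : Type*} [DecidableEq α] {n : ℕ} (a₀ : α) {S : Finset α}
    (T : Finset {f : α →₀ ℕ // (f.sum fun _ k => k) = n})
    (hT : ∀ a ∈ T, a.1.support ⊆ insert a₀ S) :
    Set.InjOn (fun (a : {f : α →₀ ℕ // (f.sum fun _ k => k) = n}) (p : S) => a.1 p) T := by
  intro a ha b hb hab
  refine Subtype.ext (Finsupp.eq_of_sum_eq_of_forall_ne a₀ (a.2.trans b.2.symm) fun p hp => ?_)
  by_cases hpS : p ∈ S
  · exact congrFun hab ⟨p, hpS⟩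
  · have hna : p ∉ a.1.support := fun h => hpS (by simpa [hp] using hT a ha h)
    have hnb : p ∉ b.1.support := fun h => hpS (by simpa [hp] using hT b hb h)
    rw [Finsupp.notMem_support_iff.1 hna, Finsupp.notMem_support_iff.1 hnb]

noncomputable def zCoeffTerm (q : ℝ) (f : (ℕ × ℕ) →₀ ℕ) : ℝ :=
  ∏ p ∈ f.support, ((1 : ℝ) / q ^ ((p.1 + 1) + p.2)) ^ (f p)

theorem zCoeffTerm_eq (q : ℝ) {f : (ℕ × ℕ) →₀ ℕ} {S : Finset (ℕ × ℕ)}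
    (hS : f.support ⊆ insert (0, 0) S) :
    zCoeffTerm q f = (1 / q) ^ (f.sum fun _ k => k) * ∏ p ∈ S, ((1 / q) ^ (p.1 + p.2)) ^ f p := by
  have hsplit : ∀ p : ℕ × ℕ, ((1 : ℝ) / q ^ ((p.1 + 1) + p.2)) ^ f p
      = (1 / q) ^ f p * ((1 / q) ^ (p.1 + p.2)) ^ f p := fun p => by
    rw [← one_div_pow, ← mul_pow, ← pow_succ', add_right_comm]
  rw [zCoeffTerm, prod_congr rfl fun p _ => hsplit p, prod_mul_distrib,
    prod_pow_eq_pow_sum]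
  congr 1
  rw [← Finsupp.prod, Finsupp.prod_of_support_subset f hS _ (fun _ _ => pow_zero _),
    prod_insert_of_eq_one_if_notMem fun _ => by simp]

theorem sum_zCoeffTerm_le {q : ℝ} (hq : 2 ≤ q) (n : ℕ)
    (T : Finset {f : (ℕ × ℕ) →₀ ℕ // (f.sum fun _ k => k) = n}) :
    ∑ a ∈ T, zCoeffTerm q a
      ≤ (1 / q) ^ n * ((1 - 1 / q) ^ 5 * (1 - (1 / q) ^ 2) * (1 - (1 / q) ^ 3))⁻¹ := by
  set x : ℝ := 1 / q
  have hx0 : 0 < x := by positivity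
  have hx : x ≤ 1 / 2 := one_div_le_one_div_of_le (by norm_num) hq
  set S := (T.sup fun a => a.1.support).erase (0, 0)
  have hS0 : ∀ p ∈ S, p.1 + p.2 ≠ 0 := fun p hp h =>
    ne_of_mem_erase hp (Prod.ext (by simp; omega) (by simp; omega))
  have hsupp : ∀ a ∈ T, a.1.support ⊆ insert (0, 0) S := fun a ha p hp => by
    rcases eq_or_ne p (0, 0) with rfl | h
    · exact mem_insert_self _ _
    · exact mem_insert_of_mem (mem_erase.2 ⟨h, Finset.mem_sup.2 ⟨a, ha, hp⟩⟩)
  set ρ : {f : (ℕ × ℕ) →₀ ℕ // (f.sum fun _ k => k) = n} → S → ℕ := fun a p => a.1 p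
  have hinj : Set.InjOn ρ T := Finsupp.injOn_restrict_of_sum_eq (0, 0) T hsupp
  calc ∑ a ∈ T, zCoeffTerm q a
      = ∑ a ∈ T, x ^ n * ∏ p : S, (x ^ (p.1.1 + p.1.2)) ^ ρ a p :=
        sum_congr rfl fun a ha => by
          rw [zCoeffTerm_eq q (hsupp a ha), a.2, ← prod_coe_sort]
    _ = x ^ n * ∑ φ ∈ T.image ρ, ∏ p : S, (x ^ (p.1.1 + p.1.2)) ^ φ p := by
        rw [mul_sum, sum_image hinj]
    _ ≤ x ^ n * ∏ p : S, (1 - x ^ (p.1.1 + p.1.2))⁻¹ := by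
        refine mul_le_mul_of_nonneg_left ?_ (pow_nonneg hx0.le n)
        exact sum_prod_pow_le_prod_inv_one_sub (y := fun p : S => x ^ (p.1.1 + p.1.2))
          (fun p => pow_nonneg hx0.le _)
          (fun p => pow_lt_one₀ hx0.le (by linarith) (hS0 p.1 p.2)) _
    _ = x ^ n * (∏ p ∈ S, (1 - x ^ (p.1 + p.2)))⁻¹ := by
        rw [prod_inv_distrib, prod_coe_sort S fun p => 1 - x ^ (p.1 + p.2)]
    _ ≤ x ^ n * ((1 - x) ^ 5 * (1 - x ^ 2) * (1 - x ^ 3))⁻¹ := by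
        gcongr
        · exact one_sub_pow_five_mul_pos hx0.le (by linarith)
        · exact le_prod_one_sub_pow_add hx0.le hx S (notMem_erase _ _)

theorem zCoeffTerm_pos {q : ℝ} (hq : 0 < q) (f : (ℕ × ℕ) →₀ ℕ) : 0 < zCoeffTerm q f :=
  prod_pos fun _ _ => by positivity

theorem summable_zCoeffTerm {q : ℝ} (hq : 2 ≤ q) (n : ℕ) :
    Summable fun a : {f : (ℕ × ℕ) →₀ ℕ // (f.sum fun _ k => k) = n} => zCoeffTerm q a :=
  summable_of_sum_le (fun a => (zCoeffTerm_pos (by linarith) a).le) (sum_zCoeffTerm_le hq n)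

theorem zCoeff_le {q : ℝ} (hq : 2 ≤ q) (n : ℕ) :
    zCoeff n q ≤ (1 / q) ^ n * ((1 - 1 / q) ^ 5 * (1 - (1 / q) ^ 2) * (1 - (1 / q) ^ 3))⁻¹ :=
  Real.tsum_le_of_sum_le (fun a => (zCoeffTerm_pos (by linarith) a).le) (sum_zCoeffTerm_le hq n)

theorem zCoeff_pos {q : ℝ} (hq : 2 ≤ q) (n : ℕ) : 0 < zCoeff n q :=
  (summable_zCoeffTerm hq n).tsum_pos (fun a => (zCoeffTerm_pos (by linarith) a).le)
    ⟨Finsupp.single (0, 0) n, Finsupp.sum_single_index rfl⟩ (zCoeffTerm_pos (by linarith) _)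

theorem one_sub_pow_mul_prod_Icc_le {x : ℝ} (hx0 : 0 ≤ x) (hx : x ≤ 1 / 2) (n : ℕ) :
    (1 - x ^ n) * ∏ k ∈ Icc 1 n, (1 - x ^ k) ≤ (1 - x) * (1 - x ^ 2) * (1 - x ^ 3) := by
  have hf := fun k => one_sub_pow_nonneg_le_one hx0 (by linarith) k
  have h1 : 0 ≤ 1 - x := by simpa using (hf 1).1
  match n with
  | 0 => simpa using mul_nonneg (mul_nonneg h1 (hf 2).1) (hf 3).1
  | 1 =>
    simp only [Icc_self, prod_singleton, pow_one]
    have : 0 ≤ 1 - x - x ^ 2 + x ^ 4 := by nlinarith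
    nlinarith [mul_nonneg h1 (mul_nonneg hx0 this)]
  | 2 =>
    rw [show Icc 1 2 = {1, 2} from rfl, prod_pair (by norm_num), pow_one]
    nlinarith [mul_nonneg (mul_nonneg h1 (hf 2).1) (mul_nonneg (pow_nonneg hx0 2) h1)]
  | n + 3 =>
    calc (1 - x ^ (n + 3)) * ∏ k ∈ Icc 1 (n + 3), (1 - x ^ k)
        ≤ ∏ k ∈ Icc 1 (n + 3), (1 - x ^ k) :=
          mul_le_of_le_one_left (prod_nonneg fun k _ => (hf k).1) (hf _).2
      _ ≤ ∏ k ∈ Icc 1 3, (1 - x ^ k) :=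
          prod_le_prod_of_subset_of_le_one (Icc_subset_Icc_right (by omega))
            (fun k _ => (hf k).1) (fun k _ _ => (hf k).2)
      _ = (1 - x) * (1 - x ^ 2) * (1 - x ^ 3) := by
          simp [show Icc 1 3 = {1, 2, 3} from rfl, mul_assoc]

theorem qPoch_eq_prod (q : ℝ) (m : ℕ) : qPoch q m = ∏ k ∈ Icc 1 m, (1 - (1 / q) ^ k) := by
  simp [qPoch]

theorem one_sub_mul_qPoch_mul_zCoeff_le_one {q : ℝ} (hq : 2 ≤ q) (n : ℕ) :
    (1 - 1 / q ^ n) * (1 - 1 / q) ^ 4 * (q ^ n * qPoch q n) * zCoeff n q ≤ 1 := by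
  set x : ℝ := 1 / q
  have hx0 : 0 < x := by positivity
  have hx : x ≤ 1 / 2 := one_div_le_one_div_of_le (by norm_num) hq
  have hC := one_sub_pow_five_mul_pos hx0.le (by linarith)
  have hqx : q ^ n * x ^ n = 1 := by rw [← mul_pow, mul_one_div_cancel (by linarith), one_pow]
  have hA : (1 - x) ^ 4 * ((1 - x ^ n) * ∏ k ∈ Icc 1 n, (1 - x ^ k))
      ≤ (1 - x) ^ 5 * (1 - x ^ 2) * (1 - x ^ 3) :=
    calc _ ≤ (1 - x) ^ 4 * ((1 - x) * (1 - x ^ 2) * (1 - x ^ 3)) :=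
          mul_le_mul_of_nonneg_left (one_sub_pow_mul_prod_Icc_le hx0.le hx n) (by positivity)
      _ = _ := by ring
  have hqz : q ^ n * zCoeff n q ≤ q ^ n * (x ^ n * ((1 - x) ^ 5 * (1 - x ^ 2) * (1 - x ^ 3))⁻¹) :=
    mul_le_mul_of_nonneg_left (zCoeff_le hq n) (by positivity)
  calc (1 - 1 / q ^ n) * (1 - x) ^ 4 * (q ^ n * qPoch q n) * zCoeff n q
      = (1 - x) ^ 4 * ((1 - x ^ n) * ∏ k ∈ Icc 1 n, (1 - x ^ k)) * (q ^ n * zCoeff n q) := by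
        rw [qPoch_eq_prod, one_div_pow]; ring
    _ ≤ (1 - x) ^ 5 * (1 - x ^ 2) * (1 - x ^ 3)
          * (q ^ n * (x ^ n * ((1 - x) ^ 5 * (1 - x ^ 2) * (1 - x ^ 3))⁻¹)) :=
        mul_le_mul hA hqz (mul_pos (by positivity) (zCoeff_pos hq n)).le hC.le
    _ = (q ^ n * x ^ n) * (((1 - x) ^ 5 * (1 - x ^ 2) * (1 - x ^ 3))
          * ((1 - x) ^ 5 * (1 - x ^ 2) * (1 - x ^ 3))⁻¹) := by ring
    _ = 1 := by rw [hqx, mul_inv_cancel₀ hC.ne', one_mul]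

section Partition

variable {n : ℕ} (l : n.Partition)

theorem conjPart_le (j : ℕ) : conjPart l j ≤ n :=
  calc conjPart l j ≤ Multiset.card l.parts := Multiset.countP_le_card _ _
    _ ≤ n := by simpa [l.parts_sum] using Multiset.card_nsmul_le_sum fun _ h => l.parts_pos h

theorem conjPart_eq_mult_add (j : ℕ) : conjPart l j = mult l j + conjPart l (j + 1) := by
  unfold conjPart mult
  induction l.parts using Multiset.induction with
  | empty => simp
  | cons a s ih =>
    simp only [Multiset.countP_cons, Multiset.count_cons, ih]
    split_ifs <;> omega

theorem conjPart_antitone : Antitone (conjPart l) :=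
  antitone_nat_of_succ_le fun j => (conjPart_eq_mult_add l j).symm ▸ Nat.le_add_left _ _

theorem le_rowLen_iff {j : ℕ} (hj : j ∈ Icc 1 n) (i : ℕ) : j ≤ rowLen l i ↔ i ≤ conjPart l j := by
  rw [mem_Icc] at hj
  unfold rowLen
  constructor
  · intro h
    by_contra! hlt
    have hsub : (Icc 1 n).filter (fun j' => i ≤ conjPart l j') ⊆ Icc 1 (j - 1) := fun j' hj' => by
      rw [mem_filter, mem_Icc] at hj'
      have := fun h : j ≤ j' => conjPart_antitone l h
      rw [mem_Icc]
      omega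
    have := card_le_card hsub
    simp only [Nat.card_Icc] at this
    omega
  · intro h
    have hsub : Icc 1 j ⊆ (Icc 1 n).filter (fun j' => i ≤ conjPart l j') := fun j' hj' => by
      rw [mem_Icc] at hj'
      exact mem_filter.2 ⟨mem_Icc.2 ⟨hj'.1, hj'.2.trans hj.2⟩, h.trans (conjPart_antitone l hj'.2)⟩
    simpa using card_le_card hsub

theorem rowLen_le (i : ℕ) : rowLen l i ≤ n :=
  (card_filter_le _ _).trans (by simp)

theorem sum_conjPart : ∑ j ∈ Icc 1 n, conjPart l j = n := by
  have key : ∀ s : Multiset ℕ, (∀ p ∈ s, p ≤ n) →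
      ∑ j ∈ Icc 1 n, s.countP (fun p => j ≤ p) = s.sum := by
    intro s
    induction s using Multiset.induction with
    | empty => simp
    | cons a s ih =>
      intro hs
      rw [Multiset.forall_mem_cons] at hs
      simp only [Multiset.countP_cons, Multiset.sum_cons, sum_add_distrib, ih hs.2, sum_boole]
      have : (Icc 1 n).filter (fun j => j ≤ a) = Icc 1 a := by
        ext j; simp only [mem_filter, mem_Icc]; omega
      simp [this, add_comm]
  exact (key l.parts fun p hp => l.le_of_mem_parts hp).trans l.parts_sum

theorem sum_sum_Icc_conjPart (g : ℕ → ℕ) :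
    ∑ j ∈ Icc 1 n, ∑ i ∈ Icc 1 (conjPart l j), g i = ∑ i ∈ Icc 1 n, g i * rowLen l i := by
  rw [sum_comm' (t' := Icc 1 n) (s' := fun i => (Icc 1 n).filter (fun j => i ≤ conjPart l j))]
  · simp [rowLen, mul_comm]
  · intro j i
    have := conjPart_le l j
    simp only [mem_Icc, mem_filter]
    omega

theorem sum_rowLen : ∑ i ∈ Icc 1 n, rowLen l i = n := by
  simpa [sum_conjPart] using (sum_sum_Icc_conjPart l fun _ => 1).symm

theorem sum_Icc_odd_eq_sq (c : ℕ) : ∑ i ∈ Icc 1 c, (2 * (i - 1) + 1) = c ^ 2 := by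
  induction c with
  | zero => simp
  | succ c ih =>
    rw [sum_Icc_succ_top (by omega), ih]
    ring_nf
    omega

theorem sum_conjPart_sq : ∑ j ∈ Icc 1 n, conjPart l j ^ 2 = n + 2 * nStat l := by
  simp_rw [← sum_Icc_odd_eq_sq, sum_sum_Icc_conjPart, add_mul, one_mul, sum_add_distrib,
    sum_rowLen, nStat, mul_sum, mul_assoc, add_comm]

theorem Pden_eq (q : ℝ) : Pden q l = q ^ (n + 2 * nStat l) * ∏ j ∈ Icc 1 n, qPoch q (mult l j) := by
  rw [Pden, prod_mul_distrib, prod_pow_eq_pow_sum, sum_conjPart_sq]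

theorem mem_cells_and_hookLen_eq {j k : ℕ} (hk : k ∈ Icc 1 (mult l j)) :
    (conjPart l j + 1 - k, j) ∈ cells l ∧ hookLen l (conjPart l j + 1 - k, j) = k := by
  rw [mem_Icc] at hk
  have hj_mem : j ∈ l.parts := Multiset.count_pos.1 (by unfold mult at hk; omega)
  have hj : j ∈ Icc 1 n := mem_Icc.2 ⟨l.parts_pos hj_mem, l.le_of_mem_parts hj_mem⟩
  have hconj := conjPart_eq_mult_add l j
  have hconj_le := conjPart_le l j
  set i := conjPart l j + 1 - k
  have hrow : rowLen l i = j := by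
    refine le_antisymm ?_ ((le_rowLen_iff l hj i).2 (by omega))
    by_contra! hlt
    have hj' : j + 1 ∈ Icc 1 n :=
      mem_Icc.2 ⟨by omega, (Nat.succ_le_of_lt hlt).trans (rowLen_le l i)⟩
    have := (le_rowLen_iff l hj' i).1 hlt
    omega
  rw [mem_Icc] at hj
  refine ⟨mem_filter.2 ⟨mem_product.2 ⟨mem_Icc.2 ⟨by omega, by omega⟩, mem_Icc.2 hj⟩, hrow.ge⟩, ?_⟩
  simp only [hookLen, arm, leg, hrow]
  omega

theorem prod_hookLen_le_prod_prod_Icc_mult (φ : ℕ → ℝ) (h0 : ∀ k, 0 ≤ φ k) (h1 : ∀ k, φ k ≤ 1) :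
    ∏ s ∈ cells l, φ (hookLen l s) ≤ ∏ j ∈ Icc 1 n, ∏ k ∈ Icc 1 (mult l j), φ k := by
  set T := (Icc 1 n).sigma fun j => Icc 1 (mult l j)
  set ψ : (_ : ℕ) × ℕ → ℕ × ℕ := fun t => (conjPart l t.1 + 1 - t.2, t.1)
  have hψ : ∀ t ∈ T, ψ t ∈ cells l ∧ hookLen l (ψ t) = t.2 := fun t ht =>
    mem_cells_and_hookLen_eq l (mem_sigma.1 ht).2
  have hinj : Set.InjOn ψ T := by
    rintro ⟨j, k⟩ ht ⟨j', k'⟩ ht' h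
    simp only [ψ, Prod.mk.injEq] at h
    obtain ⟨h, rfl⟩ := h
    have hk := (mem_Icc.1 (mem_sigma.1 ht).2).2
    have hk' := (mem_Icc.1 (mem_sigma.1 ht').2).2
    dsimp only at hk hk'
    have := conjPart_eq_mult_add l j
    simp only [Sigma.mk.injEq, heq_eq_eq, true_and]
    omega
  calc ∏ s ∈ cells l, φ (hookLen l s)
      ≤ ∏ s ∈ T.image ψ, φ (hookLen l s) :=
        prod_le_prod_of_subset_of_le_one
          (fun s hs => by obtain ⟨t, ht, rfl⟩ := mem_image.1 hs; exact (hψ t ht).1)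
          (fun _ _ => h0 _) (fun _ _ _ => h1 _)
    _ = ∏ t ∈ T, φ t.2 := by
        rw [prod_image hinj]
        exact prod_congr rfl fun t ht => by rw [(hψ t ht).2]
    _ = ∏ j ∈ Icc 1 n, ∏ k ∈ Icc 1 (mult l j), φ k := prod_sigma _ _ _

end Partition

theorem one_sub_one_div_pow_nonneg_le_one {q : ℝ} (hq : 1 ≤ q) (k : ℕ) :
    0 ≤ 1 - 1 / q ^ k ∧ 1 - 1 / q ^ k ≤ 1 :=
  ⟨sub_nonneg.2 ((div_le_one (by positivity)).2 (one_le_pow₀ hq)), sub_le_self _ (by positivity)⟩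

theorem one_sub_one_div_pow_pos {q : ℝ} (hq : 1 < q) {k : ℕ} (hk : k ≠ 0) : 0 < 1 - 1 / q ^ k :=
  sub_pos.2 ((div_lt_one (by positivity)).2 (one_lt_pow₀ hq hk))

theorem stmt14_general (q : ℝ) (hq : 2 ≤ q) (n : ℕ) (l : n.Partition) :
    (1 - 1/q^n) * (1 - 1/q)^4 * Pmeas q l ≤ Qmeas q l := by
  have hq1 : 1 < q := by linarith
  have hfac := one_sub_one_div_pow_nonneg_le_one hq1.le
  have hH : 0 < ∏ s ∈ cells l, (1 - 1 / q ^ hookLen l s) :=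
    prod_pos fun s _ => one_sub_one_div_pow_pos hq1 (Nat.succ_ne_zero _)
  have hM : 0 < ∏ j ∈ Icc 1 n, qPoch q (mult l j) :=
    prod_pos fun j _ => prod_pos fun k hk => one_sub_one_div_pow_pos hq1 (by simp at hk; omega)
  have hHM : ∏ s ∈ cells l, (1 - 1 / q ^ hookLen l s) ≤ ∏ j ∈ Icc 1 n, qPoch q (mult l j) :=
    prod_hookLen_le_prod_prod_Icc_mult l _ (fun k => (hfac k).1) (fun k => (hfac k).2)
  have hH1 : ∏ s ∈ cells l, (1 - 1 / q ^ hookLen l s) ≤ 1 := prod_le_one (fun s _ => (hfac _).1)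
    (fun s _ => (hfac _).2)
  have hPz := one_sub_mul_qPoch_mul_zCoeff_le_one hq n
  have hz := zCoeff_pos hq n
  rw [Pmeas, Pden_eq, Qmeas, prod_pow, one_div_mul_one_div, le_div_iff₀ (by positivity)]
  set H := ∏ s ∈ cells l, (1 - 1 / q ^ hookLen l s)
  set M := ∏ j ∈ Icc 1 n, qPoch q (mult l j)
  calc _ = (1 - 1 / q ^ n) * (1 - 1 / q) ^ 4 * (q ^ n * qPoch q n) * zCoeff n q * H ^ 2 / M := by
        field_simp
    _ ≤ 1 * H ^ 2 / M := by gcongr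
    _ ≤ 1 := (div_le_one hM).2 (by nlinarith)

theorem stmt14 (q : ℝ) (hq : 2 ≤ q) (n : ℕ) (hn : 1 ≤ n) (l : n.Partition) :
    (1 - 1/q^n) * (1 - 1/q)^4 * Pmeas q l ≤ Qmeas q l :=
  stmt14_general q hq n l
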